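/- Let Σ ∈ ℝ^{d×d} be symmetric positive definite, μ = (μ_1,…,μ_C) ∈ (ℝ^d)^C, and define ℓ(x; μ) = log( (1/C) Σ_{i=1}^C exp(−½‖x−μ_i‖²_{Σ⁻¹}) ) for x ∈ ℝ^d, and the responsibilities p_i(x) = exp(−½‖x−μ_i‖²_{Σ⁻¹}) / Σ_{c=1}^C exp(−½‖x−μ_c‖²_{Σ⁻¹}). Then ℓ(x; ·) is twice continuously differentiable in μ, and for every direction Δ = (Δ_1,…,Δ_C) ∈ (ℝ^d)^C its Hessian quadratic form equals Δᵀ (∇²_μ ℓ(x; μ)) Δ = −Σ_{i=1}^C p_i(x)‖Δ_i‖²_{Σ⁻¹} + [ Σ_{i=1}^C p_i(x) u_i² − ( Σ_{i=1}^C p_i(x) u_i )² ], where u_i = ⟨Σ⁻¹(x−μ_i), Δ_i⟩. -/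

import Mathlib

/-!
Along the line `s ↦ μ + sΔ` every exponent `-½‖x - μᵢ - sΔᵢ‖²_{Σ⁻¹}` is a quadratic polynomial in
`s` with value `-½‖x - μᵢ‖²_{Σ⁻¹}`, slope `uᵢ` and second derivative `-‖Δᵢ‖²_{Σ⁻¹}`; symmetry of
`Σ⁻¹` is what merges the two cross terms into `uᵢ`. For any family of functions `fᵢ` the second
derivative of `log ∑ᵢ exp fᵢ` is the softmax mean of the `fᵢ''` plus the softmax variance of the
`fᵢ'`, and the softmax of the exponents at `s = 0` is the family of responsibilities `pᵢ(x)`.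
-/

open Finset

noncomputable section

abbrev E (d : ℕ) := EuclideanSpace ℝ (Fin d)

/-- bilinear form vᵀAw. -/
def biForm {d : ℕ} (A : Matrix (Fin d) (Fin d) ℝ) (v w : E d) : ℝ :=
  ∑ a : Fin d, ∑ b : Fin d, v a * A a b * w b

/-- quadratic form vᵀAv. -/
def quadForm {d : ℕ} (A : Matrix (Fin d) (Fin d) ℝ) (v : E d) : ℝ :=
  biForm A v v

/-- log-mixture-likelihood ℓ(x; ν). -/
def ell {d C : ℕ} (S : Matrix (Fin d) (Fin d) ℝ) (x : E d) (ν : Fin C → E d) : ℝ :=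
  Real.log ((1 / C : ℝ) * ∑ i : Fin C, Real.exp (-(1 / 2) * quadForm S⁻¹ (x - ν i)))

/-- softmax responsibility p_i(x). -/
def respS {d C : ℕ} (S : Matrix (Fin d) (Fin d) ℝ) (μ : Fin C → E d)
    (x : E d) (i : Fin C) : ℝ :=
  Real.exp (-(1 / 2) * quadForm S⁻¹ (x - μ i)) /
    ∑ c : Fin C, Real.exp (-(1 / 2) * quadForm S⁻¹ (x - μ c))

open Real

section Bilinear

variable {d : ℕ} {A : Matrix (Fin d) (Fin d) ℝ}

lemma biForm_eq_toBilin' (v w : E d) :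
    biForm A v w = A.toBilin' (WithLp.ofLp v) (WithLp.ofLp w) := by
  simp [biForm, Matrix.toBilin'_apply]

lemma quadForm_sub_smul (hA : A.IsSymm) (v w : E d) (s : ℝ) :
    quadForm A (v - s • w) = quadForm A v - 2 * s * biForm A v w + s ^ 2 * quadForm A w := by
  have hsymm := (Matrix.isSymm_toBilin'_iff_isSymm.2 hA).eq (WithLp.ofLp v) (WithLp.ofLp w)
  simp only [quadForm, biForm_eq_toBilin', WithLp.ofLp_sub, WithLp.ofLp_smul, map_sub, map_smul,
    LinearMap.sub_apply, LinearMap.smul_apply, smul_eq_mul] at hsymm ⊢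
  linear_combination s * hsymm

lemma contDiff_quadForm {n : WithTop ℕ∞} : ContDiff ℝ n (quadForm A) := by
  unfold quadForm biForm
  fun_prop

end Bilinear

section LogSumExp

variable {ι : Type*} [Fintype ι]

def softmax (a : ι → ℝ) (i : ι) : ℝ :=
  exp (a i) / ∑ j, exp (a j)

variable [Nonempty ι]

lemma sum_exp_pos (a : ι → ℝ) : 0 < ∑ i, exp (a i) :=
  sum_pos (fun i _ => exp_pos (a i)) univ_nonempty

lemma hasDerivAt_log_sum_exp {f : ι → ℝ → ℝ} {f' : ι → ℝ} {s : ℝ}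
    (hf : ∀ i, HasDerivAt (f i) (f' i) s) :
    HasDerivAt (fun t => log (∑ i, exp (f i t)))
      ((∑ i, exp (f i s) * f' i) / ∑ i, exp (f i s)) s :=
  (HasDerivAt.fun_sum fun i _ => (hf i).exp).log (sum_exp_pos _).ne'

lemma deriv_deriv_log_sum_exp {f f' : ι → ℝ → ℝ} {f'' : ι → ℝ} {s : ℝ}
    (hf : ∀ i t, HasDerivAt (f i) (f' i t) t) (hf' : ∀ i, HasDerivAt (f' i) (f'' i) s) :
    deriv (deriv fun t => log (∑ i, exp (f i t))) s =
      ∑ i, softmax (f · s) i * f'' i +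
        (∑ i, softmax (f · s) i * f' i s ^ 2 - (∑ i, softmax (f · s) i * f' i s) ^ 2) := by
  have hderiv : deriv (fun t => log (∑ i, exp (f i t))) =
      fun t => (∑ i, exp (f i t) * f' i t) / ∑ i, exp (f i t) :=
    funext fun t => (hasDerivAt_log_sum_exp fun i => hf i t).deriv
  have hnum : HasDerivAt (fun t => ∑ i, exp (f i t) * f' i t)
      (∑ i, (exp (f i s) * f' i s * f' i s + exp (f i s) * f'' i)) s :=
    HasDerivAt.fun_sum fun i _ => ((hf i s).exp).mul (hf' i)
  have hden : HasDerivAt (fun t => ∑ i, exp (f i t)) (∑ i, exp (f i s) * f' i s) s :=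
    HasDerivAt.fun_sum fun i _ => (hf i s).exp
  rw [hderiv, (hnum.fun_div hden (sum_exp_pos _).ne').deriv]
  have hD := (sum_exp_pos fun i => f i s).ne'
  simp only [softmax, div_mul_eq_mul_div, ← sum_div, sum_add_distrib]
  field_simp
  ring

lemma deriv_deriv_log_sum_exp_quadratic (a b c : ι → ℝ) :
    deriv (deriv fun t => log (∑ i, exp (a i + b i * t + c i * t ^ 2))) 0 =
      ∑ i, softmax a i * (2 * c i) +
        (∑ i, softmax a i * b i ^ 2 - (∑ i, softmax a i * b i) ^ 2) := by
  have hf : ∀ i t, HasDerivAt (fun t => a i + b i * t + c i * t ^ 2) (b i + 2 * c i * t) t := by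
    intro i t
    have h := (((hasDerivAt_id' t).const_mul (b i)).const_add (a i)).fun_add
      ((hasDerivAt_pow 2 t).const_mul (c i))
    exact h.congr_deriv (by push_cast; ring)
  have hf' : ∀ i, HasDerivAt (fun t => b i + 2 * c i * t) (2 * c i) 0 := fun i => by
    simpa using ((hasDerivAt_id (0 : ℝ)).const_mul (2 * c i)).const_add (b i)
  simpa using deriv_deriv_log_sum_exp hf hf'

end LogSumExp

lemma contDiff_ell {d C : ℕ} [NeZero C] {n : WithTop ℕ∞} (S : Matrix (Fin d) (Fin d) ℝ)
    (x : E d) : ContDiff ℝ n (ell (C := C) S x) := by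
  refine ContDiff.log ?_ fun ν => ?_
  · have := contDiff_quadForm (n := n) (A := S⁻¹)
    fun_prop
  · have : (0 : ℝ) < C := by exact_mod_cast Nat.pos_of_neZero C
    exact (mul_pos (by positivity) (sum_exp_pos _)).ne'

lemma ell_add_smul {d C : ℕ} [NeZero C] {S : Matrix (Fin d) (Fin d) ℝ} (hS : S.IsSymm)
    (x : E d) (μ Δ : Fin C → E d) (s : ℝ) :
    ell S x (fun c => μ c + s • Δ c) = log (1 / C) +
      log (∑ i, exp (-(1 / 2) * quadForm S⁻¹ (x - μ i) + biForm S⁻¹ (x - μ i) (Δ i) * s +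
        -(1 / 2) * quadForm S⁻¹ (Δ i) * s ^ 2)) := by
  have hC : (0 : ℝ) < C := by exact_mod_cast Nat.pos_of_neZero C
  rw [ell, log_mul (by positivity) (sum_exp_pos _).ne']
  congr 3 with i
  rw [sub_add_eq_sub_sub, quadForm_sub_smul hS.inv]
  congr 1
  ring

theorem pointwise_hessian_quadratic_form_general
    (d C : ℕ) (hC : 2 ≤ C)
    (S : Matrix (Fin d) (Fin d) ℝ) (hS : S.PosDef)
    (μ : Fin C → E d) (x : E d) :
    ContDiff ℝ 2 (fun ν : Fin C → E d => ell S x ν) ∧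
    ∀ Δ : Fin C → E d,
      deriv (deriv fun s : ℝ => ell S x (fun c => μ c + s • Δ c)) 0 =
        -(∑ i : Fin C, respS S μ x i * quadForm S⁻¹ (Δ i)) +
          ((∑ i : Fin C, respS S μ x i * (biForm S⁻¹ (x - μ i) (Δ i)) ^ 2) -
            (∑ i : Fin C, respS S μ x i * biForm S⁻¹ (x - μ i) (Δ i)) ^ 2) := by
  have : NeZero C := ⟨by omega⟩
  refine ⟨contDiff_ell S x, fun Δ => ?_⟩
  have hresp : respS S μ x = softmax fun i => -(1 / 2) * quadForm S⁻¹ (x - μ i) := rfl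
  have hsymm : S.IsSymm := Matrix.isHermitian_iff_isSymm.1 hS.isHermitian
  simp only [funext (ell_add_smul hsymm x μ Δ), deriv_const_add',
    deriv_deriv_log_sum_exp_quadratic, hresp]
  congr 1
  rw [← sum_neg_distrib]
  exact sum_congr rfl fun i _ => by ring

/-- ℓ(x;·) is C² and its Hessian quadratic form at μ equals
−Σ_i p_i‖Δ_i‖²_{Σ⁻¹} + (Σ_i p_i u_i² − (Σ_i p_i u_i)²). -/
theorem pointwise_hessian_quadratic_form
    (d C : ℕ) (hd : 1 ≤ d) (hC : 2 ≤ C)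
    (S : Matrix (Fin d) (Fin d) ℝ) (hS : S.PosDef)
    (μ : Fin C → E d) (x : E d) :
    ContDiff ℝ 2 (fun ν : Fin C → E d => ell S x ν) ∧
    ∀ Δ : Fin C → E d,
      deriv (deriv fun s : ℝ => ell S x (fun c => μ c + s • Δ c)) 0 =
        -(∑ i : Fin C, respS S μ x i * quadForm S⁻¹ (Δ i)) +
          ((∑ i : Fin C, respS S μ x i * (biForm S⁻¹ (x - μ i) (Δ i)) ^ 2) -
            (∑ i : Fin C, respS S μ x i * biForm S⁻¹ (x - μ i) (Δ i)) ^ 2) :=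
  pointwise_hessian_quadratic_form_general d C hC S hS μ x

end
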